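/- If f is convex differentiable with L-Lipschitz gradient, then the dual-form lower bound p satisfies p(z_j) = f(z_j) for every interpolation point z_j, where p(y) = max_{λ ∈ Δ_m} [⟨λ, G^T y − f_* + (1/(2L)) d_g⟩ − (1/(2L))‖Gλ‖²]. -/

import Mathlib

/-!
For an `L`-smooth convex `f`, the interpolation inequality
`f zᵢ + ⟪gᵢ, zⱼ - zᵢ⟫ + ‖gⱼ - gᵢ‖² / (2L) ≤ f zⱼ` bounds each coefficient of the dual objective
by an affine function of `gᵢ`; averaging with weights `λ` bounds the objective by
`f zⱼ - ‖Gλ - gⱼ‖² / (2L) ≤ f zⱼ`, and the vertex `λ = eⱼ` attains `f zⱼ`.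
-/

open RealInnerProductSpace Set

section LipschitzGradient

variable {E : Type*} [NormedAddCommGroup E] [InnerProductSpace ℝ E] [CompleteSpace E]
  {f : E → ℝ} {f' : E → E} {L : ℝ}

lemma HasGradientAt.hasDerivAt_comp_add_smul {x v g : E} {t : ℝ}
    (hf : HasGradientAt f g (x + t • v)) :
    HasDerivAt (fun s : ℝ => f (x + s • v)) ⟪g, v⟫ t := by
  have hline : HasDerivAt (fun s : ℝ => x + s • v) v t := by
    simpa using ((hasDerivAt_id t).smul_const v).const_add x
  have h := hf.hasFDerivAt.comp_hasDerivAt t hline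
  simp only [InnerProductSpace.toDual_apply_apply] at h
  exact h

lemma ConvexOn.add_inner_gradient_le (hconv : ConvexOn ℝ univ f) {x g : E}
    (hf : HasGradientAt f g x) (y : E) : f x + ⟪g, y - x⟫ ≤ f y := by
  have hline : ConvexOn ℝ univ (fun t : ℝ => f (x + t • (y - x))) := by
    simpa [Function.comp_def, AffineMap.lineMap_apply, add_comm]
      using hconv.comp_affineMap (AffineMap.lineMap x y)
  have hderiv : HasDerivAt (fun t : ℝ => f (x + t • (y - x))) ⟪g, y - x⟫ 0 :=
    HasGradientAt.hasDerivAt_comp_add_smul (by simpa using hf)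
  have hslope := hline.le_slope_of_hasDerivWithinAt_Ioi (mem_univ 0) (mem_univ 1) one_pos
    hderiv.hasDerivWithinAt
  simp only [slope_def_field, zero_smul, add_zero, one_smul, add_sub_cancel, sub_zero,
    div_one] at hslope
  linarith

lemma le_add_inner_add_sq_of_lipschitz_gradient (hgrad : ∀ x, HasGradientAt f (f' x) x)
    (hlip : ∀ x y, ‖f' x - f' y‖ ≤ L * ‖x - y‖) (x y : E) :
    f y ≤ f x + ⟪f' x, y - x⟫ + L / 2 * ‖y - x‖ ^ 2 := by
  set v := y - x
  have hderiv (t : ℝ) : HasDerivAt (fun s : ℝ => f (x + s • v)) ⟪f' (x + t • v), v⟫ t :=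
    (hgrad _).hasDerivAt_comp_add_smul
  have hbound (t : ℝ) :
      HasDerivAt (fun s : ℝ => f x + s * ⟪f' x, v⟫ + L / 2 * s ^ 2 * ‖v‖ ^ 2)
        (⟪f' x, v⟫ + L * t * ‖v‖ ^ 2) t := by
    refine ((((hasDerivAt_id t).mul_const ⟪f' x, v⟫).const_add (f x)).add
      (((hasDerivAt_pow 2 t).const_mul (L / 2)).mul_const (‖v‖ ^ 2))).congr_deriv ?_
    simp only [Nat.add_one_sub_one, pow_one, Nat.cast_ofNat]
    ring
  have hslope {t : ℝ} (ht : t ∈ Ico (0 : ℝ) 1) :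
      ⟪f' (x + t • v), v⟫ ≤ ⟪f' x, v⟫ + L * t * ‖v‖ ^ 2 :=
    calc ⟪f' (x + t • v), v⟫ = ⟪f' x, v⟫ + ⟪f' (x + t • v) - f' x, v⟫ := by
          rw [inner_sub_left]; ring
      _ ≤ ⟪f' x, v⟫ + L * ‖x + t • v - x‖ * ‖v‖ := by
          gcongr
          exact (real_inner_le_norm _ _).trans
            (mul_le_mul_of_nonneg_right (hlip _ _) (norm_nonneg v))
      _ = ⟪f' x, v⟫ + L * t * ‖v‖ ^ 2 := by
          rw [add_sub_cancel_left, norm_smul, Real.norm_of_nonneg ht.1]; ring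
  have h := image_le_of_deriv_right_le_deriv_boundary
    (fun t _ => (hderiv t).continuousAt.continuousWithinAt)
    (fun t _ => (hderiv t).hasDerivWithinAt) (by simp)
    (fun t _ => (hbound t).continuousAt.continuousWithinAt)
    (fun t _ => (hbound t).hasDerivWithinAt) (fun t ht => hslope ht)
    (right_mem_Icc.2 zero_le_one)
  simpa [v] using h

lemma ConvexOn.add_inner_add_sq_norm_gradient_sub_le (hconv : ConvexOn ℝ univ f)
    (hgrad : ∀ x, HasGradientAt f (f' x) x) (hL : 0 < L)
    (hlip : ∀ x y, ‖f' x - f' y‖ ≤ L * ‖x - y‖) (x y : E) :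
    f x + ⟪f' x, y - x⟫ + 1 / (2 * L) * ‖f' y - f' x‖ ^ 2 ≤ f y := by
  set u := f' y - f' x
  -- compare both linear models at the gradient step `w` taken from `y`
  set w := y - L⁻¹ • u
  have hlower := hconv.add_inner_gradient_le (hgrad x) w
  have hupper := le_add_inner_add_sq_of_lipschitz_gradient hgrad hlip y w
  have hwx : w - x = (y - x) - L⁻¹ • u := by simp only [w]; abel
  have hwy : w - y = -(L⁻¹ • u) := by simp only [w]; abel
  rw [hwx, inner_sub_right, real_inner_smul_right] at hlower
  rw [hwy, inner_neg_right, real_inner_smul_right, norm_neg, norm_smul, Real.norm_eq_abs,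
    abs_inv, abs_of_pos hL] at hupper
  have hgap : ⟪f' y, u⟫ - ⟪f' x, u⟫ = ‖u‖ ^ 2 := by
    rw [← inner_sub_left, real_inner_self_eq_norm_sq]
  have hscale : L / 2 * (L⁻¹ * ‖u‖) ^ 2 = L⁻¹ * ‖u‖ ^ 2 - 1 / (2 * L) * ‖u‖ ^ 2 := by
    field_simp
    ring
  have hgap' : L⁻¹ * ⟪f' y, u⟫ - L⁻¹ * ⟪f' x, u⟫ = L⁻¹ * ‖u‖ ^ 2 := by rw [← mul_sub, hgap]
  linarith

end LipschitzGradient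

lemma sum_mul_sub_mul_norm_sum_smul_sq_le {ι E : Type*} [Fintype ι] [NormedAddCommGroup E]
    [InnerProductSpace ℝ E] {w a : ι → ℝ} {g : ι → E} {v : E} {B c : ℝ}
    (hw : w ∈ stdSimplex ℝ ι) (hc : 0 ≤ c)
    (ha : ∀ i, a i ≤ B + c * (‖g i‖ ^ 2 - ‖g i - v‖ ^ 2)) :
    ∑ i, w i * a i - c * ‖∑ i, w i • g i‖ ^ 2 ≤ B := by
  obtain ⟨hw_nonneg, hw_sum⟩ := hw
  set s := ∑ i, w i • g i
  -- `‖g‖² - ‖g - v‖² = 2⟪g, v⟫ - ‖v‖²` is affine in `g`, so it commutes with convex combinations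
  have haffine (h : E) : ‖h‖ ^ 2 - ‖h - v‖ ^ 2 = 2 * ⟪h, v⟫ - ‖v‖ ^ 2 := by
    rw [norm_sub_sq_real]; ring
  have hcomb : ∑ i, w i * (B + c * (‖g i‖ ^ 2 - ‖g i - v‖ ^ 2))
      = B + c * (‖s‖ ^ 2 - ‖s - v‖ ^ 2) := by
    have hinner : ⟪s, v⟫ = ∑ i, w i * ⟪g i, v⟫ := by
      simp only [s, sum_inner, real_inner_smul_left]
    calc ∑ i, w i * (B + c * (‖g i‖ ^ 2 - ‖g i - v‖ ^ 2))
        = ∑ i, ((B - c * ‖v‖ ^ 2) * w i + 2 * c * (w i * ⟪g i, v⟫)) :=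
          Finset.sum_congr rfl fun i _ => by rw [haffine]; ring
      _ = B + c * (‖s‖ ^ 2 - ‖s - v‖ ^ 2) := by
          rw [Finset.sum_add_distrib, ← Finset.mul_sum, ← Finset.mul_sum, hw_sum, ← hinner,
            haffine]
          ring
  have hle : ∑ i, w i * a i ≤ B + c * (‖s‖ ^ 2 - ‖s - v‖ ^ 2) :=
    hcomb ▸ Finset.sum_le_sum fun i _ => mul_le_mul_of_nonneg_left (ha i) (hw_nonneg i)
  nlinarith [mul_nonneg hc (sq_nonneg ‖s - v‖)]

theorem stmt6_general (n m : ℕ) (f : EuclideanSpace ℝ (Fin n) → ℝ)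
    (f' : EuclideanSpace ℝ (Fin n) → EuclideanSpace ℝ (Fin n))
    (hconv : ConvexOn ℝ Set.univ f)
    (hgrad : ∀ x, HasGradientAt f (f' x) x)
    (L : ℝ) (hL : 0 < L)
    (hlip : ∀ x y, ‖f' x - f' y‖ ≤ L * ‖x - y‖)
    (z : Fin m → EuclideanSpace ℝ (Fin n)) (j : Fin m) :
    (⨆ lam : {l : Fin m → ℝ // l ∈ stdSimplex ℝ (Fin m)},
        ((∑ i, lam.1 i * (⟪f' (z i), z j⟫ - (⟪f' (z i), z i⟫ - f (z i))
              + (1/(2*L)) * ‖f' (z i)‖^2))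
          - (1/(2*L)) * ‖∑ i, lam.1 i • f' (z i)‖^2)) = f (z j) := by
  set p : (Fin m → ℝ) → ℝ := fun l =>
    (∑ i, l i * (⟪f' (z i), z j⟫ - (⟪f' (z i), z i⟫ - f (z i)) + (1/(2*L)) * ‖f' (z i)‖^2))
      - (1/(2*L)) * ‖∑ i, l i • f' (z i)‖^2
  have hbound (l : Fin m → ℝ) (hl : l ∈ stdSimplex ℝ (Fin m)) : p l ≤ f (z j) := by
    refine sum_mul_sub_mul_norm_sum_smul_sq_le (v := f' (z j)) hl (by positivity) fun i => ?_
    have h := hconv.add_inner_add_sq_norm_gradient_sub_le hgrad hL hlip (z i) (z j)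
    rw [inner_sub_right, norm_sub_rev] at h
    linarith
  have hvertex : p (Pi.single j 1) = f (z j) := by
    simp [p, Pi.single_apply]
  have : Nonempty {l : Fin m → ℝ // l ∈ stdSimplex ℝ (Fin m)} := ⟨⟨_, single_mem_stdSimplex ℝ j⟩⟩
  exact le_antisymm (ciSup_le fun l => hbound l.1 l.2)
    (le_ciSup_of_le ⟨f (z j), forall_mem_range.2 fun l => hbound l.1 l.2⟩
      ⟨_, single_mem_stdSimplex ℝ j⟩ hvertex.ge)

theorem stmt6 (n m : ℕ) (hm : 0 < m) (f : EuclideanSpace ℝ (Fin n) → ℝ)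
    (f' : EuclideanSpace ℝ (Fin n) → EuclideanSpace ℝ (Fin n))
    (hconv : ConvexOn ℝ Set.univ f)
    (hgrad : ∀ x, HasGradientAt f (f' x) x)
    (L : ℝ) (hL : 0 < L)
    (hlip : ∀ x y, ‖f' x - f' y‖ ≤ L * ‖x - y‖)
    (z : Fin m → EuclideanSpace ℝ (Fin n)) (j : Fin m) :
    (⨆ lam : {l : Fin m → ℝ // l ∈ stdSimplex ℝ (Fin m)},
        ((∑ i, lam.1 i * (⟪f' (z i), z j⟫ - (⟪f' (z i), z i⟫ - f (z i))
              + (1/(2*L)) * ‖f' (z i)‖^2))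
          - (1/(2*L)) * ‖∑ i, lam.1 i • f' (z i)‖^2)) = f (z j) :=
  stmt6_general n m f f' hconv hgrad L hL hlip z j
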